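/- arXiv:1206.6232 — 2 statements merged into one kernel-verified Lean document; each statement's English description precedes it below -/
import Mathlib

section
/- Let h : S¹ → ℝ be Morse with K = inf_x(|h'(x)| + |h''(x)|) > 0, let g(x,y) = h(x)+h(y), and let f : S¹×S¹ → ℝ be smooth with 2‖∇(f−g)‖_∞ + 5‖∇²(f−g)‖_∞ < K. Then for every n ≥ 1 the function f_n(x_0,…,x_n) = Σ_{i=0}^{n-1} f(x_i,x_{i+1}) is a Morse function on (S¹)^{n+1}. -/
open Real

variable (n : ℕ)

/-- `f_n(x_0,…,x_n) = Σ_{i=0}^{n-1} f(x_i,x_{i+1})` on Euclidean `ℝ^{n+1}`. -/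
noncomputable def ffun (f : ℝ × ℝ → ℝ) (x : EuclideanSpace ℝ (Fin (n + 1))) : ℝ :=
  ∑ i : Fin n, f (x i.castSucc, x i.succ)

/-- The Hessian matrix of `F` at `x`. -/
noncomputable def hess (F : EuclideanSpace ℝ (Fin (n + 1)) → ℝ)
    (x : EuclideanSpace ℝ (Fin (n + 1))) : Matrix (Fin (n + 1)) (Fin (n + 1)) ℝ :=
  Matrix.of fun i j =>
    fderiv ℝ (fun y => fderiv ℝ F y (EuclideanSpace.single j 1)) x (EuclideanSpace.single i 1)

/-- `‖∇f‖_∞`. -/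
noncomputable def gradSup (f : ℝ × ℝ → ℝ) : ℝ :=
  ⨆ p : ℝ × ℝ, max |fderiv ℝ f p (1, 0)| |fderiv ℝ f p (0, 1)|

/-- `‖∇²f‖_∞`. -/
noncomputable def hessSup (f : ℝ × ℝ → ℝ) : ℝ :=
  ⨆ p : ℝ × ℝ,
    max (max |fderiv ℝ (fun q => fderiv ℝ f q (1, 0)) p (1, 0)|
             |fderiv ℝ (fun q => fderiv ℝ f q (1, 0)) p (0, 1)|)
        (max |fderiv ℝ (fun q => fderiv ℝ f q (0, 1)) p (1, 0)|
             |fderiv ℝ (fun q => fderiv ℝ f q (0, 1)) p (0, 1)|)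


lemma fderiv_pair_apply (φ : ℝ × ℝ → ℝ) (p v : ℝ × ℝ) :
    fderiv ℝ φ p v = v.1 * fderiv ℝ φ p (1, 0) + v.2 * fderiv ℝ φ p (0, 1) := by
  have hv : v = v.1 • ((1:ℝ), (0:ℝ)) + v.2 • ((0:ℝ), (1:ℝ)) := by ext <;> simp
  rw [hv, map_add, map_smul, map_smul]
  simp [smul_eq_mul]

noncomputable def D1 (φ : ℝ × ℝ → ℝ) (p : ℝ × ℝ) : ℝ := fderiv ℝ φ p (1, 0)
noncomputable def D2 (φ : ℝ × ℝ → ℝ) (p : ℝ × ℝ) : ℝ := fderiv ℝ φ p (0, 1)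

lemma contDiff_D1 {φ : ℝ × ℝ → ℝ} (hφ : ContDiff ℝ (⊤ : ℕ∞) φ) : ContDiff ℝ (⊤ : ℕ∞) (D1 φ) := by
  have h1 : ContDiff ℝ (⊤ : ℕ∞) (fderiv ℝ φ) := hφ.fderiv_right (by simp)
  exact (ContinuousLinearMap.apply ℝ ℝ ((1:ℝ), (0:ℝ))).contDiff.comp h1

lemma contDiff_D2 {φ : ℝ × ℝ → ℝ} (hφ : ContDiff ℝ (⊤ : ℕ∞) φ) : ContDiff ℝ (⊤ : ℕ∞) (D2 φ) := by
  have h1 : ContDiff ℝ (⊤ : ℕ∞) (fderiv ℝ φ) := hφ.fderiv_right (by simp)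
  exact (ContinuousLinearMap.apply ℝ ℝ ((0:ℝ), (1:ℝ))).contDiff.comp h1

lemma fderiv_fderiv_expand {φ : ℝ × ℝ → ℝ} (hφ : ContDiff ℝ (⊤ : ℕ∞) φ) (p : ℝ × ℝ) (a b c e : ℝ) :
    fderiv ℝ (fun q => fderiv ℝ φ q (a, b)) p (c, e)
      = a * (c * D1 (D1 φ) p + e * D2 (D1 φ) p) + b * (c * D1 (D2 φ) p + e * D2 (D2 φ) p) := by
  have h1 : (fun q => fderiv ℝ φ q (a, b)) = fun q => a * D1 φ q + b * D2 φ q := by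
    funext q
    simpa [D1, D2] using fderiv_pair_apply φ q (a, b)
  have d1 := (contDiff_D1 hφ).differentiable (by simp) p
  have d2 := (contDiff_D2 hφ).differentiable (by simp) p
  rw [h1, fderiv_fun_add (d1.const_mul a) (d2.const_mul b), fderiv_const_mul d1, fderiv_const_mul d2]
  have e1 := fderiv_pair_apply (D1 φ) p (c, e)
  have e2 := fderiv_pair_apply (D2 φ) p (c, e)
  simp only [ContinuousLinearMap.add_apply, ContinuousLinearMap.smul_apply, smul_eq_mul]
  rw [e1, e2]
  ring_nf
  rfl

lemma hasFDerivAt_fst_comp (ψ : ℝ → ℝ) (hψ : Differentiable ℝ ψ) (p : ℝ × ℝ) :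
    HasFDerivAt (fun q : ℝ × ℝ => ψ q.1) ((deriv ψ p.1) • ContinuousLinearMap.fst ℝ ℝ ℝ) p :=
  (hψ p.1).hasDerivAt.comp_hasFDerivAt p hasFDerivAt_fst

lemma hasFDerivAt_snd_comp (ψ : ℝ → ℝ) (hψ : Differentiable ℝ ψ) (p : ℝ × ℝ) :
    HasFDerivAt (fun q : ℝ × ℝ => ψ q.2) ((deriv ψ p.2) • ContinuousLinearMap.snd ℝ ℝ ℝ) p :=
  (hψ p.2).hasDerivAt.comp_hasFDerivAt p hasFDerivAt_snd

lemma D1_fst (ψ : ℝ → ℝ) (hψ : Differentiable ℝ ψ) (p : ℝ × ℝ) :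
    D1 (fun q : ℝ × ℝ => ψ q.1) p = deriv ψ p.1 := by
  rw [D1, (hasFDerivAt_fst_comp ψ hψ p).fderiv]; simp

lemma D2_fst (ψ : ℝ → ℝ) (hψ : Differentiable ℝ ψ) (p : ℝ × ℝ) :
    D2 (fun q : ℝ × ℝ => ψ q.1) p = 0 := by
  rw [D2, (hasFDerivAt_fst_comp ψ hψ p).fderiv]; simp

lemma D1_snd (ψ : ℝ → ℝ) (hψ : Differentiable ℝ ψ) (p : ℝ × ℝ) :
    D1 (fun q : ℝ × ℝ => ψ q.2) p = 0 := by
  rw [D1, (hasFDerivAt_snd_comp ψ hψ p).fderiv]; simp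

lemma D2_snd (ψ : ℝ → ℝ) (hψ : Differentiable ℝ ψ) (p : ℝ × ℝ) :
    D2 (fun q : ℝ × ℝ => ψ q.2) p = deriv ψ p.2 := by
  rw [D2, (hasFDerivAt_snd_comp ψ hψ p).fderiv]; simp

section gderivs
variable (h : ℝ → ℝ)

lemma D1_g (hsm : ContDiff ℝ (⊤ : ℕ∞) h) (p : ℝ × ℝ) : D1 (fun q : ℝ × ℝ => h q.1 + h q.2) p = deriv h p.1 := by
  have hd := hsm.differentiable (by simp)
  rw [D1, ((hasFDerivAt_fst_comp h hd p).fun_add (hasFDerivAt_snd_comp h hd p)).fderiv]; simp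

lemma D2_g (hsm : ContDiff ℝ (⊤ : ℕ∞) h) (p : ℝ × ℝ) : D2 (fun q : ℝ × ℝ => h q.1 + h q.2) p = deriv h p.2 := by
  have hd := hsm.differentiable (by simp)
  rw [D2, ((hasFDerivAt_fst_comp h hd p).fun_add (hasFDerivAt_snd_comp h hd p)).fderiv]; simp

lemma hsm' (hsm : ContDiff ℝ (⊤ : ℕ∞) h) : ContDiff ℝ ((⊤:ℕ∞) : WithTop ℕ∞) (deriv h) := (contDiff_infty_iff_deriv.mp (hsm.of_le (by simp))).2

lemma D1_g_eq (hsm : ContDiff ℝ (⊤ : ℕ∞) h) : D1 (fun q : ℝ × ℝ => h q.1 + h q.2) = fun p => deriv h p.1 :=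
  funext (D1_g h hsm)
lemma D2_g_eq (hsm : ContDiff ℝ (⊤ : ℕ∞) h) : D2 (fun q : ℝ × ℝ => h q.1 + h q.2) = fun p => deriv h p.2 :=
  funext (D2_g h hsm)

lemma D11_g (hsm : ContDiff ℝ (⊤ : ℕ∞) h) (p : ℝ × ℝ) :
    D1 (D1 (fun q : ℝ × ℝ => h q.1 + h q.2)) p = deriv (deriv h) p.1 := by
  rw [D1_g_eq h hsm]; exact D1_fst _ ((hsm' h hsm).differentiable (by simp)) p
lemma D21_g (hsm : ContDiff ℝ (⊤ : ℕ∞) h) (p : ℝ × ℝ) :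
    D2 (D1 (fun q : ℝ × ℝ => h q.1 + h q.2)) p = 0 := by
  rw [D1_g_eq h hsm]; exact D2_fst _ ((hsm' h hsm).differentiable (by simp)) p
lemma D12_g (hsm : ContDiff ℝ (⊤ : ℕ∞) h) (p : ℝ × ℝ) :
    D1 (D2 (fun q : ℝ × ℝ => h q.1 + h q.2)) p = 0 := by
  rw [D2_g_eq h hsm]; exact D1_snd _ ((hsm' h hsm).differentiable (by simp)) p
lemma D22_g (hsm : ContDiff ℝ (⊤ : ℕ∞) h) (p : ℝ × ℝ) :
    D2 (D2 (fun q : ℝ × ℝ => h q.1 + h q.2)) p = deriv (deriv h) p.2 := by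
  rw [D2_g_eq h hsm]; exact D2_snd _ ((hsm' h hsm).differentiable (by simp)) p
end gderivs

variable (n : ℕ)


noncomputable def Lk (k : Fin n) : EuclideanSpace ℝ (Fin (n + 1)) →L[ℝ] ℝ × ℝ :=
  (EuclideanSpace.proj k.castSucc).prod (EuclideanSpace.proj k.succ)

lemma Lk_apply (k : Fin n) (x : EuclideanSpace ℝ (Fin (n + 1))) :
    Lk n k x = (x k.castSucc, x k.succ) := rfl

lemma hasFDerivAt_ffun (f : ℝ × ℝ → ℝ) (hf : Differentiable ℝ f)
    (x : EuclideanSpace ℝ (Fin (n + 1))) :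
    HasFDerivAt (ffun n f)
      (∑ k : Fin n, (fderiv ℝ f (x k.castSucc, x k.succ)).comp (Lk n k)) x := by
  apply HasFDerivAt.fun_sum
  intro k _
  exact ((hf _).hasFDerivAt).comp x (Lk n k).hasFDerivAt

lemma fderiv_ffun (f : ℝ × ℝ → ℝ) (hf : Differentiable ℝ f)
    (x v : EuclideanSpace ℝ (Fin (n + 1))) :
    fderiv ℝ (ffun n f) x v
      = ∑ k : Fin n, fderiv ℝ f (x k.castSucc, x k.succ) (v k.castSucc, v k.succ) := by
  rw [(hasFDerivAt_ffun n f hf x).fderiv]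
  simp [ContinuousLinearMap.sum_apply, Lk_apply]

lemma differentiable_fderiv_apply (f : ℝ × ℝ → ℝ) (hf : ContDiff ℝ (⊤ : ℕ∞) f) (c : ℝ × ℝ) :
    Differentiable ℝ (fun q => fderiv ℝ f q c) := by
  have h1 : ContDiff ℝ (⊤ : ℕ∞) (fderiv ℝ f) := hf.fderiv_right (by simp)
  exact (((ContinuousLinearMap.apply ℝ ℝ c).contDiff.comp h1)).differentiable (by simp)

lemma hess_ffun_apply (f : ℝ × ℝ → ℝ) (hf : ContDiff ℝ (⊤ : ℕ∞) f)
    (x : EuclideanSpace ℝ (Fin (n + 1))) (i j : Fin (n + 1)) :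
    hess n (ffun n f) x i j
      = ∑ k : Fin n,
          fderiv ℝ (fun q => fderiv ℝ f q
              ((EuclideanSpace.single j 1 : EuclideanSpace ℝ (Fin (n+1))) k.castSucc,
               (EuclideanSpace.single j 1 : EuclideanSpace ℝ (Fin (n+1))) k.succ))
            (x k.castSucc, x k.succ)
            ((EuclideanSpace.single i 1 : EuclideanSpace ℝ (Fin (n+1))) k.castSucc,
             (EuclideanSpace.single i 1 : EuclideanSpace ℝ (Fin (n+1))) k.succ) := by
  have hfd := hf.differentiable (by simp)
  have hfun : (fun y => fderiv ℝ (ffun n f) y (EuclideanSpace.single j 1))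
      = fun y => ∑ k : Fin n, (fun q => fderiv ℝ f q
              ((EuclideanSpace.single j 1 : EuclideanSpace ℝ (Fin (n+1))) k.castSucc,
               (EuclideanSpace.single j 1 : EuclideanSpace ℝ (Fin (n+1))) k.succ)) (Lk n k y) := by
    funext y
    rw [fderiv_ffun n f hfd y]
    rfl
  have H : HasFDerivAt (fun y => fderiv ℝ (ffun n f) y (EuclideanSpace.single j 1))
      (∑ k : Fin n, (fderiv ℝ (fun q => fderiv ℝ f q
              ((EuclideanSpace.single j 1 : EuclideanSpace ℝ (Fin (n+1))) k.castSucc,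
               (EuclideanSpace.single j 1 : EuclideanSpace ℝ (Fin (n+1))) k.succ)) (Lk n k x)).comp (Lk n k)) x := by
    rw [hfun]
    apply HasFDerivAt.fun_sum
    intro k _
    exact ((differentiable_fderiv_apply f hf _ _).hasFDerivAt).comp x (Lk n k).hasFDerivAt
  show fderiv ℝ (fun y => fderiv ℝ (ffun n f) y (EuclideanSpace.single j 1)) x (EuclideanSpace.single i 1) = _
  rw [H.fderiv]
  simp only [ContinuousLinearMap.sum_apply, ContinuousLinearMap.comp_apply, Lk_apply]

variable (n : ℕ)

lemma sum_ite_castSucc (A : Fin n → ℝ) (j : Fin (n + 1)) :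
    (∑ k : Fin n, if k.castSucc = j then A k else 0)
      = if hj : (j : ℕ) < n then A ⟨j, hj⟩ else 0 := by
  by_cases hj : (j : ℕ) < n
  · rw [dif_pos hj]
    rw [Finset.sum_eq_single ⟨j, hj⟩]
    · rw [if_pos]; ext; simp
    · intro k _ hk
      rw [if_neg]
      intro hc
      exact hk (by ext; simpa [Fin.ext_iff] using hc)
    · simp
  · rw [dif_neg hj]
    apply Finset.sum_eq_zero
    intro k _
    rw [if_neg]
    intro hc
    apply hj
    have : (k : ℕ) = (j : ℕ) := by simpa [Fin.ext_iff] using hc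
    omega
lemma sum_ite_succ (A : Fin n → ℝ) (j : Fin (n + 1)) :
    (∑ k : Fin n, if k.succ = j then A k else 0)
      = if hj : 0 < (j : ℕ) then A ⟨(j : ℕ) - 1, by have := j.isLt; omega⟩ else 0 := by
  by_cases hj : 0 < (j : ℕ)
  · rw [dif_pos hj]
    rw [Finset.sum_eq_single ⟨(j : ℕ) - 1, by have := j.isLt; omega⟩]
    · rw [if_pos]; ext; simp [Fin.val_succ]; omega
    · intro k _ hk
      rw [if_neg]
      intro hc
      apply hk
      have : (k : ℕ) + 1 = (j : ℕ) := by simpa [Fin.ext_iff, Fin.val_succ] using hc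
      ext; simp; omega
    · simp
  · rw [dif_neg hj]
    apply Finset.sum_eq_zero
    intro k _
    rw [if_neg]
    intro hc
    apply hj
    have : (k : ℕ) + 1 = (j : ℕ) := by simpa [Fin.ext_iff, Fin.val_succ] using hc
    omega

lemma fderiv_ffun_single (f : ℝ × ℝ → ℝ) (hf : Differentiable ℝ f)
    (x : EuclideanSpace ℝ (Fin (n + 1))) (j : Fin (n + 1)) :
    fderiv ℝ (ffun n f) x (EuclideanSpace.single j 1)
      = (if hj : (j : ℕ) < n then
            D1 f (x (Fin.castSucc ⟨j, hj⟩), x (Fin.succ ⟨j, hj⟩)) else 0)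
        + (if hj : 0 < (j : ℕ) then
            D2 f (x (Fin.castSucc ⟨(j : ℕ) - 1, by have := j.isLt; omega⟩),
                  x (Fin.succ ⟨(j : ℕ) - 1, by have := j.isLt; omega⟩)) else 0) := by
  rw [fderiv_ffun n f hf x]
  have hterm : ∀ k : Fin n,
      fderiv ℝ f (x k.castSucc, x k.succ)
          ((EuclideanSpace.single j 1 : EuclideanSpace ℝ (Fin (n+1))) k.castSucc,
           (EuclideanSpace.single j 1 : EuclideanSpace ℝ (Fin (n+1))) k.succ)
        = (if k.castSucc = j then D1 f (x k.castSucc, x k.succ) else 0)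
          + (if k.succ = j then D2 f (x k.castSucc, x k.succ) else 0) := by
    intro k
    rw [fderiv_pair_apply]
    simp [EuclideanSpace.single_apply, D1, D2, ite_mul]
  simp_rw [hterm]
  rw [Finset.sum_add_distrib, sum_ite_castSucc, sum_ite_succ]

lemma mulVec_hess_ffun (f : ℝ × ℝ → ℝ) (hf : ContDiff ℝ (⊤ : ℕ∞) f)
    (x : EuclideanSpace ℝ (Fin (n + 1))) (u : Fin (n + 1) → ℝ) (j : Fin (n + 1)) :
    (hess n (ffun n f) x).mulVec u j
      = (if hj : (j : ℕ) < n then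
           D1 (D1 f) (x (Fin.castSucc ⟨j, hj⟩), x (Fin.succ ⟨j, hj⟩)) * u (Fin.castSucc ⟨j, hj⟩)
           + D1 (D2 f) (x (Fin.castSucc ⟨j, hj⟩), x (Fin.succ ⟨j, hj⟩)) * u (Fin.succ ⟨j, hj⟩)
         else 0)
        + (if hj : 0 < (j : ℕ) then
           D2 (D1 f) (x (Fin.castSucc ⟨(j : ℕ) - 1, by have := j.isLt; omega⟩),
                      x (Fin.succ ⟨(j : ℕ) - 1, by have := j.isLt; omega⟩))
             * u (Fin.castSucc ⟨(j : ℕ) - 1, by have := j.isLt; omega⟩)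
           + D2 (D2 f) (x (Fin.castSucc ⟨(j : ℕ) - 1, by have := j.isLt; omega⟩),
                        x (Fin.succ ⟨(j : ℕ) - 1, by have := j.isLt; omega⟩))
             * u (Fin.succ ⟨(j : ℕ) - 1, by have := j.isLt; omega⟩)
         else 0) := by
  simp only [Matrix.mulVec, dotProduct]
  simp_rw [hess_ffun_apply n f hf x j, fderiv_fderiv_expand hf]
  simp only [EuclideanSpace.single_apply]
  simp_rw [Finset.sum_mul]
  rw [Finset.sum_comm]
  simp only [add_mul, ite_mul, one_mul, zero_mul, Finset.sum_add_distrib,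
    Finset.sum_ite_eq, Finset.mem_univ, if_true]
  rw [sum_ite_castSucc, sum_ite_succ, sum_ite_castSucc, sum_ite_succ]
  by_cases hj1 : (j : ℕ) < n <;> by_cases hj2 : 0 < (j : ℕ) <;>
    simp [hj1, hj2] <;> ring

lemma bdd_of_periodic_cont (φ : ℝ × ℝ → ℝ) (hc : Continuous φ)
    (hp : ∀ (p : ℝ × ℝ) (m k : ℤ), φ (p.1 + 2 * π * m, p.2 + 2 * π * k) = φ p) :
    BddAbove (Set.range φ) := by
  have h2π : (0:ℝ) < 2 * π := by positivity
  have hS : IsCompact ((Set.Icc (0:ℝ) (2*π)) ×ˢ (Set.Icc (0:ℝ) (2*π))) :=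
    isCompact_Icc.prod isCompact_Icc
  refine BddAbove.mono ?_ ((hS.image hc).bddAbove)
  rintro y ⟨p, rfl⟩
  refine ⟨(p.1 - 2*π*⌊p.1/(2*π)⌋, p.2 - 2*π*⌊p.2/(2*π)⌋), ⟨⟨?_, ?_⟩, ⟨?_, ?_⟩⟩, ?_⟩
  · have := Int.sub_floor_div_mul_nonneg p.1 h2π
    linarith [this, mul_comm (2*π) (⌊p.1/(2*π)⌋:ℝ)]
  · have := Int.sub_floor_div_mul_lt p.1 h2π
    linarith [this, mul_comm (2*π) (⌊p.1/(2*π)⌋:ℝ)]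
  · have := Int.sub_floor_div_mul_nonneg p.2 h2π
    linarith [this, mul_comm (2*π) (⌊p.2/(2*π)⌋:ℝ)]
  · have := Int.sub_floor_div_mul_lt p.2 h2π
    linarith [this, mul_comm (2*π) (⌊p.2/(2*π)⌋:ℝ)]
  · have := hp (p.1 - 2*π*⌊p.1/(2*π)⌋, p.2 - 2*π*⌊p.2/(2*π)⌋) ⌊p.1/(2*π)⌋ ⌊p.2/(2*π)⌋
    simp only at this
    rw [sub_add_cancel, sub_add_cancel] at this
    rw [← this]

lemma fderiv_periodic2 (φ : ℝ × ℝ → ℝ) (hφ : Differentiable ℝ φ)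
    (hp : ∀ (p : ℝ × ℝ) (m k : ℤ), φ (p.1 + 2 * π * m, p.2 + 2 * π * k) = φ p) :
    ∀ (p : ℝ × ℝ) (m k : ℤ), fderiv ℝ φ (p.1 + 2 * π * m, p.2 + 2 * π * k) = fderiv ℝ φ p := by
  intro p m k
  set c : ℝ × ℝ := (2 * π * m, 2 * π * k) with hc
  have hpt : ((p.1 + 2 * π * m, p.2 + 2 * π * k) : ℝ × ℝ) = p + c := rfl
  have hfun : (fun q => φ (q + c)) = φ := funext fun q => hp q m k
  have H : HasFDerivAt (fun q => φ (q + c)) (fderiv ℝ φ (p + c)) p := by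
    have := (hφ (p + c)).hasFDerivAt.comp p ((hasFDerivAt_id p).add_const c)
    simpa [Function.comp_def] using this
  rw [hfun] at H
  rw [hpt, ← H.fderiv]

section Add

lemma D1_add {A B : ℝ × ℝ → ℝ} {p : ℝ × ℝ} (hA : DifferentiableAt ℝ A p) (hB : DifferentiableAt ℝ B p) :
    D1 (fun q => A q + B q) p = D1 A p + D1 B p := by
  simp only [D1]
  rw [fderiv_fun_add hA hB]
  simp

lemma D2_add {A B : ℝ × ℝ → ℝ} {p : ℝ × ℝ} (hA : DifferentiableAt ℝ A p) (hB : DifferentiableAt ℝ B p) :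
    D2 (fun q => A q + B q) p = D2 A p + D2 B p := by
  simp only [D2]
  rw [fderiv_fun_add hA hB]
  simp

end Add

set_option maxHeartbeats 3200000 in
theorem ffun_is_morse_near_gfun
    (h : ℝ → ℝ) (hsm : ContDiff ℝ (⊤ : ℕ∞) h) (hper : Function.Periodic h (2 * π))
    (hmorse : ∀ t : ℝ, deriv h t = 0 → deriv (deriv h) t ≠ 0)
    (K : ℝ) (hK : K = ⨅ t : ℝ, (|deriv h t| + |deriv (deriv h) t|)) (hKpos : 0 < K)
    (g : ℝ × ℝ → ℝ) (hg : ∀ p : ℝ × ℝ, g p = h p.1 + h p.2)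
    (f : ℝ × ℝ → ℝ) (hfsm : ContDiff ℝ (⊤ : ℕ∞) f)
    (hfper : ∀ (p : ℝ × ℝ) (m k : ℤ), f (p.1 + 2 * π * m, p.2 + 2 * π * k) = f p)
    (hclose : 2 * gradSup (f - g) + 5 * hessSup (f - g) < K)
    (hn : 1 ≤ n) :
    ∀ x : EuclideanSpace ℝ (Fin (n + 1)),
      fderiv ℝ (ffun n f) x = 0 → (hess n (ffun n f) x).det ≠ 0 := by
  classical
  intro x hcrit hdet
  set d : ℝ × ℝ → ℝ := f - g with hdset
  have hdapp : ∀ p, d p = f p - g p := fun p => rfl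
  have hgeq : g = fun p : ℝ × ℝ => h p.1 + h p.2 := funext hg
  have hgsm : ContDiff ℝ (⊤ : ℕ∞) g := by
    rw [hgeq]; exact (hsm.comp contDiff_fst).add (hsm.comp contDiff_snd)
  have hdsm : ContDiff ℝ (⊤ : ℕ∞) d := hfsm.sub hgsm
  have hfeq : f = fun p => g p + d p := by funext p; simp [hdapp]
  have hfd := hfsm.differentiable (by simp)
  have hgd := hgsm.differentiable (by simp)
  have hdd := hdsm.differentiable (by simp)
  have hsm2 : ContDiff ℝ ((⊤:ℕ∞) : WithTop ℕ∞) (deriv h) := hsm' h hsm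
  have hder1 : Differentiable ℝ (deriv h) := hsm2.differentiable (by simp)
  -- periodicity of h for integer multiples
  have hhper : ∀ (t : ℝ) (m : ℤ), h (t + 2 * π * m) = h t := by
    intro t m
    have := (hper.int_mul m) t
    rw [show t + 2 * π * m = t + m * (2 * π) by ring]
    exact this
  have hgper : ∀ (p : ℝ × ℝ) (m k : ℤ), g (p.1 + 2 * π * m, p.2 + 2 * π * k) = g p := by
    intro p m k
    rw [hg, hg]
    simp only
    rw [hhper p.1 m, hhper p.2 k]
  have hdper : ∀ (p : ℝ × ℝ) (m k : ℤ), d (p.1 + 2 * π * m, p.2 + 2 * π * k) = d p := by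
    intro p m k
    rw [hdapp, hdapp, hfper p m k, hgper p m k]
  -- first-order sup bounds
  have hD1per : ∀ (p : ℝ × ℝ) (m k : ℤ), D1 d (p.1 + 2 * π * m, p.2 + 2 * π * k) = D1 d p := by
    intro p m k; simp only [D1]; rw [fderiv_periodic2 d hdd hdper p m k]
  have hD2per : ∀ (p : ℝ × ℝ) (m k : ℤ), D2 d (p.1 + 2 * π * m, p.2 + 2 * π * k) = D2 d p := by
    intro p m k; simp only [D2]; rw [fderiv_periodic2 d hdd hdper p m k]
  have hbddg : BddAbove (Set.range fun p : ℝ × ℝ =>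
      max |fderiv ℝ d p (1, 0)| |fderiv ℝ d p (0, 1)|) := by
    apply bdd_of_periodic_cont
    · exact ((contDiff_D1 hdsm).continuous.abs.max (contDiff_D2 hdsm).continuous.abs)
    · intro p m k
      have h1 := hD1per p m k
      have h2 := hD2per p m k
      simp only [D1, D2] at h1 h2
      rw [h1, h2]
  have hgrad_le : ∀ p : ℝ × ℝ, |D1 d p| ≤ gradSup d ∧ |D2 d p| ≤ gradSup d := by
    intro p
    have hs := le_ciSup hbddg p
    exact ⟨le_trans (le_max_left _ _) hs, le_trans (le_max_right _ _) hs⟩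
  have ha0 : 0 ≤ gradSup d := le_trans (abs_nonneg _) (hgrad_le (0, 0)).1
  -- second-order sup bounds
  have hD1dsm : ContDiff ℝ (⊤ : ℕ∞) (D1 d) := contDiff_D1 hdsm
  have hD2dsm : ContDiff ℝ (⊤ : ℕ∞) (D2 d) := contDiff_D2 hdsm
  have hD11per : ∀ (p : ℝ × ℝ) (m k : ℤ),
      fderiv ℝ (D1 d) (p.1 + 2 * π * m, p.2 + 2 * π * k) = fderiv ℝ (D1 d) p :=
    fderiv_periodic2 (D1 d) (hD1dsm.differentiable (by simp)) hD1per
  have hD22per : ∀ (p : ℝ × ℝ) (m k : ℤ),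
      fderiv ℝ (D2 d) (p.1 + 2 * π * m, p.2 + 2 * π * k) = fderiv ℝ (D2 d) p :=
    fderiv_periodic2 (D2 d) (hD2dsm.differentiable (by simp)) hD2per
  have hessSup_eq : hessSup d = ⨆ p : ℝ × ℝ,
      max (max |D1 (D1 d) p| |D2 (D1 d) p|) (max |D1 (D2 d) p| |D2 (D2 d) p|) := rfl
  have hbddh : BddAbove (Set.range fun p : ℝ × ℝ =>
      max (max |D1 (D1 d) p| |D2 (D1 d) p|) (max |D1 (D2 d) p| |D2 (D2 d) p|)) := by
    apply bdd_of_periodic_cont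
    · exact (((contDiff_D1 hD1dsm).continuous.abs.max (contDiff_D2 hD1dsm).continuous.abs).max
        ((contDiff_D1 hD2dsm).continuous.abs.max (contDiff_D2 hD2dsm).continuous.abs))
    · intro p m k
      simp only [D1, D2]
      rw [hD11per p m k, hD22per p m k]
  have hhess_le : ∀ p : ℝ × ℝ, |D1 (D1 d) p| ≤ hessSup d ∧ |D2 (D1 d) p| ≤ hessSup d ∧
      |D1 (D2 d) p| ≤ hessSup d ∧ |D2 (D2 d) p| ≤ hessSup d := by
    intro p
    have hs := le_ciSup hbddh p
    rw [hessSup_eq]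
    exact ⟨le_trans (le_trans (le_max_left _ _) (le_max_left _ _)) hs,
      le_trans (le_trans (le_max_right _ _) (le_max_left _ _)) hs,
      le_trans (le_trans (le_max_left _ _) (le_max_right _ _)) hs,
      le_trans (le_trans (le_max_right _ _) (le_max_right _ _)) hs⟩
  have hb0 : 0 ≤ hessSup d := le_trans (abs_nonneg _) (hhess_le (0, 0)).1
  -- K below each value
  have hKle : ∀ t : ℝ, K ≤ |deriv h t| + |deriv (deriv h) t| := by
    intro t
    rw [hK]
    exact ciInf_le ⟨0, by rintro y ⟨t, rfl⟩; positivity⟩ t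
  -- additivity of first partials
  have hD1f : ∀ p : ℝ × ℝ, D1 f p = deriv h p.1 + D1 d p := by
    intro p
    conv_lhs => rw [hfeq]
    rw [D1_add (hgd p) (hdd p)]
    congr 1
    rw [hgeq]
    exact D1_g h hsm p
  have hD2f : ∀ p : ℝ × ℝ, D2 f p = deriv h p.2 + D2 d p := by
    intro p
    conv_lhs => rw [hfeq]
    rw [D2_add (hgd p) (hdd p)]
    congr 1
    rw [hgeq]
    exact D2_g h hsm p
  have hD1f_eq : D1 f = fun p => deriv h p.1 + D1 d p := funext hD1f
  have hD2f_eq : D2 f = fun p => deriv h p.2 + D2 d p := funext hD2f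
  have hdfst : Differentiable ℝ (fun p : ℝ × ℝ => deriv h p.1) := hder1.comp differentiable_fst
  have hdsnd : Differentiable ℝ (fun p : ℝ × ℝ => deriv h p.2) := hder1.comp differentiable_snd
  have hD11f : ∀ p : ℝ × ℝ, D1 (D1 f) p = deriv (deriv h) p.1 + D1 (D1 d) p := by
    intro p
    rw [hD1f_eq, D1_add (hdfst p) ((contDiff_D1 hdsm).differentiable (by simp) p),
      D1_fst (deriv h) hder1 p]
  have hD21f : ∀ p : ℝ × ℝ, D2 (D1 f) p = D2 (D1 d) p := by
    intro p
    rw [hD1f_eq, D2_add (hdfst p) ((contDiff_D1 hdsm).differentiable (by simp) p),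
      D2_fst (deriv h) hder1 p, zero_add]
  have hD12f : ∀ p : ℝ × ℝ, D1 (D2 f) p = D1 (D2 d) p := by
    intro p
    rw [hD2f_eq, D1_add (hdsnd p) ((contDiff_D2 hdsm).differentiable (by simp) p),
      D1_snd (deriv h) hder1 p, zero_add]
  have hD22f : ∀ p : ℝ × ℝ, D2 (D2 f) p = deriv (deriv h) p.2 + D2 (D2 d) p := by
    intro p
    rw [hD2f_eq, D2_add (hdsnd p) ((contDiff_D2 hdsm).differentiable (by simp) p),
      D2_snd (deriv h) hder1 p]
  -- pick a null vector of the Hessian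
  obtain ⟨u, hu0, hmv⟩ := Matrix.exists_mulVec_eq_zero_iff.mpr hdet
  obtain ⟨j, -, hjmax⟩ := Finset.exists_max_image Finset.univ (fun i => |u i|)
    ⟨0, Finset.mem_univ 0⟩
  have hUpos : 0 < |u j| := by
    rcases eq_or_lt_of_le (abs_nonneg (u j)) with heq | hlt
    · exfalso
      apply hu0
      funext i
      have hi := hjmax i (Finset.mem_univ i)
      rw [← heq] at hi
      exact abs_eq_zero.mp (le_antisymm hi (abs_nonneg _))
    · exact hlt
  have hgrad0 : fderiv ℝ (ffun n f) x (EuclideanSpace.single j 1) = 0 := by rw [hcrit]; rfl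
  rw [fderiv_ffun_single n f hfd x j] at hgrad0
  have hrow0 : (hess n (ffun n f) x).mulVec u j = 0 := by rw [hmv]; rfl
  rw [mulVec_hess_ffun n f hfsm x u j] at hrow0
  have hc1 : ∀ (hh : (j : ℕ) < n), Fin.castSucc ⟨(j : ℕ), hh⟩ = j := by
    intro hh; ext; simp
  have hs2 : ∀ (hh : (j : ℕ) - 1 < n), 0 < (j : ℕ) → Fin.succ ⟨(j : ℕ) - 1, hh⟩ = j := by
    intro hh hj; ext; simp [Fin.val_succ]; omega
  -- main estimates
  have hmain : |deriv h (x j)| ≤ gradSup d ∧ |deriv (deriv h) (x j)| ≤ 2 * hessSup d := by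
    by_cases hj1 : (j : ℕ) < n <;> by_cases hj2 : 0 < (j : ℕ)
    · -- interior
      rw [dif_pos hj1, dif_pos hj2, hD1f, hD2f] at hgrad0
      rw [dif_pos hj1, dif_pos hj2, hD11f, hD12f, hD21f, hD22f] at hrow0
      dsimp only at hgrad0 hrow0
      rw [hc1 hj1, hs2 _ hj2] at hgrad0 hrow0
      set P1 := (x j, x (Fin.succ ⟨(j : ℕ), hj1⟩)) with hP1
      set P2 := (x (Fin.castSucc ⟨(j : ℕ) - 1, by have := j.isLt; omega⟩), x j) with hP2
      constructor
      · have b1 := abs_le.mp (hgrad_le P1).1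
        have b2 := abs_le.mp (hgrad_le P2).2
        rw [abs_le]; constructor <;> linarith
      · have t1 := (hhess_le P1).1
        have t2 := (hhess_le P1).2.2.1
        have t3 := (hhess_le P2).2.1
        have t4 := (hhess_le P2).2.2.2
        have m1 : |u (Fin.succ ⟨(j : ℕ), hj1⟩)| ≤ |u j| := hjmax _ (Finset.mem_univ _)
        have m2 : |u (Fin.castSucc ⟨(j : ℕ) - 1, by have := j.isLt; omega⟩)| ≤ |u j| :=
          hjmax _ (Finset.mem_univ _)
        have key : 2 * |deriv (deriv h) (x j)| * |u j| ≤ 4 * hessSup d * |u j| := by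
          have h1 : 2 * deriv (deriv h) (x j) * u j
              = -(D1 (D1 d) P1 * u j + D1 (D2 d) P1 * u (Fin.succ ⟨(j : ℕ), hj1⟩)
                 + D2 (D1 d) P2 * u (Fin.castSucc ⟨(j : ℕ) - 1, by have := j.isLt; omega⟩)
                 + D2 (D2 d) P2 * u j) := by linarith
          calc 2 * |deriv (deriv h) (x j)| * |u j|
              = |2 * deriv (deriv h) (x j) * u j| := by
                rw [abs_mul, abs_mul, abs_two]
            _ = |D1 (D1 d) P1 * u j + D1 (D2 d) P1 * u (Fin.succ ⟨(j : ℕ), hj1⟩)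
                 + D2 (D1 d) P2 * u (Fin.castSucc ⟨(j : ℕ) - 1, by have := j.isLt; omega⟩)
                 + D2 (D2 d) P2 * u j| := by rw [h1, abs_neg]
            _ ≤ |D1 (D1 d) P1 * u j| + |D1 (D2 d) P1 * u (Fin.succ ⟨(j : ℕ), hj1⟩)|
                 + |D2 (D1 d) P2 * u (Fin.castSucc ⟨(j : ℕ) - 1, by have := j.isLt; omega⟩)|
                 + |D2 (D2 d) P2 * u j| := by
                exact le_trans (abs_add_le _ _) (add_le_add (abs_add_three _ _ _) le_rfl)
            _ ≤ 4 * hessSup d * |u j| := by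
                rw [abs_mul, abs_mul, abs_mul, abs_mul]
                nlinarith [abs_nonneg (u j), abs_nonneg (D1 (D1 d) P1),
                  abs_nonneg (D1 (D2 d) P1), abs_nonneg (D2 (D1 d) P2),
                  abs_nonneg (D2 (D2 d) P2), hb0]
        nlinarith [key, hUpos]
    · -- j = 0 (no left neighbour)
      rw [dif_pos hj1, dif_neg hj2, hD1f] at hgrad0
      rw [dif_pos hj1, dif_neg hj2, hD11f, hD12f] at hrow0
      dsimp only at hgrad0 hrow0
      rw [hc1 hj1] at hgrad0 hrow0
      set P1 := (x j, x (Fin.succ ⟨(j : ℕ), hj1⟩)) with hP1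
      constructor
      · have b1 := abs_le.mp (hgrad_le P1).1
        rw [abs_le]; constructor <;> linarith
      · have t1 := (hhess_le P1).1
        have t2 := (hhess_le P1).2.2.1
        have m1 : |u (Fin.succ ⟨(j : ℕ), hj1⟩)| ≤ |u j| := hjmax _ (Finset.mem_univ _)
        have key : |deriv (deriv h) (x j)| * |u j| ≤ 2 * hessSup d * |u j| := by
          have h1 : deriv (deriv h) (x j) * u j
              = -(D1 (D1 d) P1 * u j + D1 (D2 d) P1 * u (Fin.succ ⟨(j : ℕ), hj1⟩)) := by
            linarith
          calc |deriv (deriv h) (x j)| * |u j|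
              = |deriv (deriv h) (x j) * u j| := (abs_mul _ _).symm
            _ = |D1 (D1 d) P1 * u j + D1 (D2 d) P1 * u (Fin.succ ⟨(j : ℕ), hj1⟩)| := by
                rw [h1, abs_neg]
            _ ≤ |D1 (D1 d) P1 * u j| + |D1 (D2 d) P1 * u (Fin.succ ⟨(j : ℕ), hj1⟩)| :=
                abs_add_le _ _
            _ ≤ 2 * hessSup d * |u j| := by
                rw [abs_mul, abs_mul]
                nlinarith [abs_nonneg (u j), abs_nonneg (D1 (D1 d) P1),
                  abs_nonneg (D1 (D2 d) P1), hb0]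
        nlinarith [key, hUpos]
    · -- j = n (no right neighbour)
      rw [dif_neg hj1, dif_pos hj2, hD2f] at hgrad0
      rw [dif_neg hj1, dif_pos hj2, hD21f, hD22f] at hrow0
      dsimp only at hgrad0 hrow0
      rw [hs2 _ hj2] at hgrad0 hrow0
      set P2 := (x (Fin.castSucc ⟨(j : ℕ) - 1, by have := j.isLt; omega⟩), x j) with hP2
      constructor
      · have b2 := abs_le.mp (hgrad_le P2).2
        rw [abs_le]; constructor <;> linarith
      · have t3 := (hhess_le P2).2.1
        have t4 := (hhess_le P2).2.2.2
        have m2 : |u (Fin.castSucc ⟨(j : ℕ) - 1, by have := j.isLt; omega⟩)| ≤ |u j| :=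
          hjmax _ (Finset.mem_univ _)
        have key : |deriv (deriv h) (x j)| * |u j| ≤ 2 * hessSup d * |u j| := by
          have h1 : deriv (deriv h) (x j) * u j
              = -(D2 (D1 d) P2 * u (Fin.castSucc ⟨(j : ℕ) - 1, by have := j.isLt; omega⟩)
                  + D2 (D2 d) P2 * u j) := by linarith
          calc |deriv (deriv h) (x j)| * |u j|
              = |deriv (deriv h) (x j) * u j| := (abs_mul _ _).symm
            _ = |D2 (D1 d) P2 * u (Fin.castSucc ⟨(j : ℕ) - 1, by have := j.isLt; omega⟩)
                  + D2 (D2 d) P2 * u j| := by rw [h1, abs_neg]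
            _ ≤ |D2 (D1 d) P2 * u (Fin.castSucc ⟨(j : ℕ) - 1, by have := j.isLt; omega⟩)|
                  + |D2 (D2 d) P2 * u j| := abs_add_le _ _
            _ ≤ 2 * hessSup d * |u j| := by
                rw [abs_mul, abs_mul]
                nlinarith [abs_nonneg (u j), abs_nonneg (D2 (D1 d) P2),
                  abs_nonneg (D2 (D2 d) P2), hb0]
        nlinarith [key, hUpos]
    · exfalso
      have := j.isLt
      omega
  have hfinal := hKle (x j)
  linarith [hmain.1, hmain.2, ha0, hb0, hclose]
end

section
/- Let h : S¹ → ℝ be Morse, g_n(x_0,…,x_n) = h(x_0) + 2h(x_1) + ⋯ + 2h(x_{n-1}) + h(x_n), and K = inf_x(|h'(x)|+|h''(x)|). Then M(g_n)(x) ≥ K for all n ≥ 1 and x ∈ (S¹)^{n+1}, where M(F)(x) = max_i |∂F(x)/∂x_i| + inf_{‖u‖=1}‖Hess_x F · u‖. -/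
open Real

variable (n : ℕ)

/-- `g_n(x_0,…,x_n) = h(x_0) + 2h(x_1) + ⋯ + 2h(x_{n-1}) + h(x_n)`. -/
noncomputable def gfun (h : ℝ → ℝ) (x : EuclideanSpace ℝ (Fin (n + 1))) : ℝ :=
  ∑ i : Fin n, (h (x i.castSucc) + h (x i.succ))

/-- `M(F)(x) = max_i |∂F(x)/∂x_i| + inf_{‖u‖=1} ‖Hess_x F · u‖`. -/
noncomputable def MF (F : EuclideanSpace ℝ (Fin (n + 1)) → ℝ)
    (x : EuclideanSpace ℝ (Fin (n + 1))) : ℝ :=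
  (⨆ i : Fin (n + 1), |fderiv ℝ F x (EuclideanSpace.single i 1)|) +
    ⨅ u : {u : EuclideanSpace ℝ (Fin (n + 1)) // ‖u‖ = 1},
      ‖(WithLp.equiv 2 (Fin (n + 1) → ℝ)).symm ((hess n F x).mulVec (u : Fin (n + 1) → ℝ))‖

section Aux

noncomputable def cfac (m : Fin (n + 1)) : ℝ :=
  ∑ i : Fin n, ((if i.castSucc = m then (1:ℝ) else 0) + (if i.succ = m then (1:ℝ) else 0))

lemma one_le_cfac (hn : 1 ≤ n) (m : Fin (n + 1)) : 1 ≤ cfac n m := by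
  have hnn : ∀ i ∈ Finset.univ, (0:ℝ) ≤ (if (i : Fin n).castSucc = m then (1:ℝ) else 0) + (if i.succ = m then (1:ℝ) else 0) := by
    intro i _; positivity
  rcases eq_or_ne m 0 with hm | hm
  · have h0 : (⟨0, by omega⟩ : Fin n).castSucc = m := by
      subst hm; simp [Fin.ext_iff]
    calc (1:ℝ) ≤ (if (⟨0, by omega⟩ : Fin n).castSucc = m then (1:ℝ) else 0) + (if (⟨0, by omega⟩ : Fin n).succ = m then (1:ℝ) else 0) := by
          simp [h0]; positivity
      _ ≤ cfac n m := Finset.single_le_sum hnn (Finset.mem_univ _)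
  · have h0 : (m.pred hm).succ = m := Fin.succ_pred m hm
    calc (1:ℝ) ≤ (if (m.pred hm).castSucc = m then (1:ℝ) else 0) + (if (m.pred hm).succ = m then (1:ℝ) else 0) := by
          simp [h0]; positivity
      _ ≤ cfac n m := Finset.single_le_sum hnn (Finset.mem_univ _)

noncomputable def Dg (h : ℝ → ℝ) (x : EuclideanSpace ℝ (Fin (n + 1))) :
    EuclideanSpace ℝ (Fin (n + 1)) →L[ℝ] ℝ :=
  ∑ i : Fin n, ((deriv h (x i.castSucc)) • (EuclideanSpace.proj i.castSucc : EuclideanSpace ℝ (Fin (n+1)) →L[ℝ] ℝ)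
    + (deriv h (x i.succ)) • (EuclideanSpace.proj i.succ : EuclideanSpace ℝ (Fin (n+1)) →L[ℝ] ℝ))

lemma hasFDerivAt_coord (f : ℝ → ℝ) (hd : Differentiable ℝ f) (k : Fin (n + 1))
    (x : EuclideanSpace ℝ (Fin (n + 1))) :
    HasFDerivAt (fun y : EuclideanSpace ℝ (Fin (n+1)) => f (y k))
      ((deriv f (x k)) • (EuclideanSpace.proj k : EuclideanSpace ℝ (Fin (n+1)) →L[ℝ] ℝ)) x := by
  have hp : HasFDerivAt (fun y : EuclideanSpace ℝ (Fin (n+1)) => y k)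
      (EuclideanSpace.proj k : EuclideanSpace ℝ (Fin (n+1)) →L[ℝ] ℝ) x :=
    (EuclideanSpace.proj k : EuclideanSpace ℝ (Fin (n+1)) →L[ℝ] ℝ).hasFDerivAt
  exact ((hd (x k)).hasDerivAt).comp_hasFDerivAt x hp

lemma hasFDerivAt_gfun (h : ℝ → ℝ) (hd : Differentiable ℝ h) (x : EuclideanSpace ℝ (Fin (n + 1))) :
    HasFDerivAt (gfun n h) (Dg n h x) x := by
  unfold gfun Dg
  exact HasFDerivAt.fun_sum fun i _ =>
    (hasFDerivAt_coord n h hd i.castSucc x).add (hasFDerivAt_coord n h hd i.succ x)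

lemma Dg_apply_single (h : ℝ → ℝ) (x : EuclideanSpace ℝ (Fin (n + 1))) (m : Fin (n + 1)) :
    Dg n h x (EuclideanSpace.single m 1) = cfac n m * deriv h (x m) := by
  have : ∀ k : Fin (n+1), (EuclideanSpace.proj k : EuclideanSpace ℝ (Fin (n+1)) →L[ℝ] ℝ)
      (EuclideanSpace.single m 1) = if k = m then 1 else 0 := by
    intro k; simp [EuclideanSpace.single_apply]
  rw [Dg, ContinuousLinearMap.sum_apply, cfac, Finset.sum_mul]
  refine Finset.sum_congr rfl fun i _ => ?_
  simp only [ContinuousLinearMap.add_apply, ContinuousLinearMap.smul_apply, this, smul_eq_mul]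
  rcases eq_or_ne i.castSucc m with h1 | h1
  · subst h1
    have h2 : i.succ ≠ i.castSucc := by simp [Fin.ext_iff]
    simp [h2]
  · rcases eq_or_ne i.succ m with h2 | h2
    · subst h2; simp [h1]
    · simp [h1, h2]

lemma hess_gfun (h : ℝ → ℝ) (hsm : ContDiff ℝ (⊤ : ℕ∞) h) (x : EuclideanSpace ℝ (Fin (n + 1)))
    (i j : Fin (n + 1)) :
    hess n (gfun n h) x i j = if j = i then cfac n j * deriv (deriv h) (x j) else 0 := by
  have hd : Differentiable ℝ h := hsm.differentiable (by simp)
  have hsm' : ContDiff ℝ ((⊤:ℕ∞) : WithTop ℕ∞) h := hsm.of_le (by simp)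
  have hdd : Differentiable ℝ (deriv h) :=
    ((contDiff_infty_iff_deriv.mp hsm').2).differentiable (by simp)
  have hfun : (fun y => fderiv ℝ (gfun n h) y (EuclideanSpace.single j 1))
      = fun y : EuclideanSpace ℝ (Fin (n+1)) => cfac n j * deriv h (y j) := by
    funext y; rw [(hasFDerivAt_gfun n h hd y).fderiv, Dg_apply_single]
  have hF : HasFDerivAt (fun y : EuclideanSpace ℝ (Fin (n+1)) => cfac n j * deriv h (y j))
      ((cfac n j) • ((deriv (deriv h) (x j)) •
        (EuclideanSpace.proj j : EuclideanSpace ℝ (Fin (n+1)) →L[ℝ] ℝ))) x :=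
    (hasFDerivAt_coord n (deriv h) hdd j x).const_mul _
  show fderiv ℝ (fun y => fderiv ℝ (gfun n h) y (EuclideanSpace.single j 1)) x
      (EuclideanSpace.single i 1) = _
  rw [hfun, hF.fderiv]
  simp only [ContinuousLinearMap.smul_apply, PiLp.proj_apply,
    EuclideanSpace.single_apply, smul_eq_mul]
  rcases eq_or_ne j i with hji | hji <;> simp [hji] <;> ring

lemma hess_mulVec (h : ℝ → ℝ) (hsm : ContDiff ℝ (⊤ : ℕ∞) h) (x : EuclideanSpace ℝ (Fin (n + 1)))
    (u : Fin (n + 1) → ℝ) (k : Fin (n + 1)) :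
    (hess n (gfun n h) x).mulVec u k = cfac n k * deriv (deriv h) (x k) * u k := by
  rw [Matrix.mulVec, dotProduct]
  rw [Finset.sum_eq_single k]
  · rw [hess_gfun n h hsm]; simp
  · intro j _ hj; rw [hess_gfun n h hsm]; simp [hj]
  · simp


end Aux

/-- If `h : S¹ → ℝ` is Morse and `K = inf_t (|h'(t)| + |h''(t)|)`, then
`M(g_n)(x) ≥ K` for all `n ≥ 1` and all `x ∈ (S¹)^{n+1}`. -/
theorem MF_gfun_ge_K
    (h : ℝ → ℝ) (hsm : ContDiff ℝ (⊤ : ℕ∞) h) (hper : Function.Periodic h (2 * π))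
    (hmorse : ∀ t : ℝ, deriv h t = 0 → deriv (deriv h) t ≠ 0)
    (K : ℝ) (hK : K = ⨅ t : ℝ, (|deriv h t| + |deriv (deriv h) t|))
    (hn : 1 ≤ n) (x : EuclideanSpace ℝ (Fin (n + 1))) :
    K ≤ MF n (gfun n h) x := by
  have hd : Differentiable ℝ h := hsm.differentiable (by simp)
  obtain ⟨m, -, hm⟩ := Finset.exists_min_image Finset.univ
    (fun k : Fin (n + 1) => |deriv (deriv h) (x k)|) ⟨0, Finset.mem_univ 0⟩
  have hK' : K ≤ |deriv h (x m)| + |deriv (deriv h) (x m)| := by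
    rw [hK]
    exact ciInf_le ⟨0, by rintro y ⟨t, rfl⟩; positivity⟩ (x m)
  refine hK'.trans (add_le_add ?_ ?_)
  · -- first derivative part
    refine le_trans ?_ (le_ciSup
      (f := fun i => |fderiv ℝ (gfun n h) x (EuclideanSpace.single i 1)|)
      (Set.Finite.bddAbove (Set.finite_range _)) m)
    rw [(hasFDerivAt_gfun n h hd x).fderiv, Dg_apply_single, abs_mul]
    have h1 := one_le_cfac n hn m
    have h2 : |cfac n m| = cfac n m := abs_of_nonneg (by linarith)
    rw [h2]
    nlinarith [abs_nonneg (deriv h (x m))]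
  · -- Hessian part
    haveI : Nonempty {u : EuclideanSpace ℝ (Fin (n + 1)) // ‖u‖ = 1} :=
      ⟨⟨EuclideanSpace.single 0 1, by simp⟩⟩
    refine le_ciInf fun u => ?_
    have hsum : ∑ k : Fin (n+1), ((u : EuclideanSpace ℝ (Fin (n+1))) k) ^ 2 = 1 := by
      have h1 : Real.sqrt (∑ k : Fin (n+1), ‖(u : EuclideanSpace ℝ (Fin (n+1))) k‖ ^ 2) = 1 := by
        rw [← EuclideanSpace.norm_eq]; exact u.2
      have h2 : (0:ℝ) ≤ ∑ k : Fin (n+1), ‖(u : EuclideanSpace ℝ (Fin (n+1))) k‖ ^ 2 := by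
        positivity
      have h3 := Real.sq_sqrt h2
      rw [h1] at h3
      simpa [Real.norm_eq_abs, sq_abs] using h3.symm
    rw [EuclideanSpace.norm_eq]
    have key : |deriv (deriv h) (x m)|
        = Real.sqrt (∑ k : Fin (n+1), (deriv (deriv h) (x m)) ^ 2
            * ((u : EuclideanSpace ℝ (Fin (n+1))) k) ^ 2) := by
      rw [← Finset.mul_sum, hsum, mul_one, Real.sqrt_sq_eq_abs]
    rw [key]
    apply Real.sqrt_le_sqrt
    refine Finset.sum_le_sum fun k _ => ?_
    have h1 : 1 ≤ cfac n k := one_le_cfac n hn k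
    have h2 : |deriv (deriv h) (x m)| ≤ |deriv (deriv h) (x k)| := hm k (Finset.mem_univ k)
    have h2' : (deriv (deriv h) (x m)) ^ 2 ≤ (deriv (deriv h) (x k)) ^ 2 := by
      rw [← sq_abs, ← sq_abs (deriv (deriv h) (x k))]
      exact pow_le_pow_left₀ (abs_nonneg _) h2 2
    simp only [WithLp.equiv_symm_apply, WithLp.ofLp_toLp]; rw [hess_mulVec n h hsm x _ k, Real.norm_eq_abs, sq_abs]
    have h3 : (deriv (deriv h) (x m)) ^ 2 * ((u : EuclideanSpace ℝ (Fin (n+1))) k) ^ 2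
        ≤ (deriv (deriv h) (x k)) ^ 2 * ((u : EuclideanSpace ℝ (Fin (n+1))) k) ^ 2 :=
      mul_le_mul_of_nonneg_right h2' (sq_nonneg _)
    have hc2 : 1 ≤ (cfac n k) ^ 2 := by nlinarith
    calc deriv (deriv h) (x m) ^ 2 * ((u : EuclideanSpace ℝ (Fin (n+1))) k) ^ 2
        ≤ deriv (deriv h) (x k) ^ 2 * ((u : EuclideanSpace ℝ (Fin (n+1))) k) ^ 2 := h3
      _ = (deriv (deriv h) (x k) * (u : EuclideanSpace ℝ (Fin (n+1))) k) ^ 2 := by ring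
      _ ≤ (cfac n k) ^ 2 * (deriv (deriv h) (x k) * (u : EuclideanSpace ℝ (Fin (n+1))) k) ^ 2 :=
          le_mul_of_one_le_left (sq_nonneg _) hc2
      _ = (cfac n k * deriv (deriv h) (x k) * (u : EuclideanSpace ℝ (Fin (n+1))) k) ^ 2 := by ring
end
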